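/- arXiv:0805.1488 — 6 statements merged into one kernel-verified Lean document; each statement's English description precedes it below -/
import Mathlib

section
/- Let A be a C*-algebra, H a Hilbert space, ρ : A → B(H) a *-representation, and Λ : D → L a linear map from a dense left ideal D ⊆ A into a Hilbert space L satisfying ‖Λ(x)‖² = φ(x* x) for a weight φ. A vector α ∈ H is 'bounded' (there is r > 0 with ‖ρ(x)α‖² ≤ r‖Λ(x)‖² for all x ∈ D) if and only if it is 'square-integrable' (for every β ∈ H there is r_β > 0 with |⟨β, ρ(x)α⟩|² ≤ r_β ‖Λ(x)‖² for all x ∈ D). -/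
/-!
The forward direction is Cauchy–Schwarz. Conversely, the functionals `β ↦ ⟪ρ(x)α, β⟫ / ‖Λ x‖`
are pointwise bounded by square-integrability, so by the uniform boundedness principle their
norms `‖ρ(x)α‖ / ‖Λ x‖` are bounded; when `Λ x = 0`, testing against `β = ρ(x)α` forces
`ρ(x)α = 0`.
-/

open scoped InnerProductSpace

lemma exists_pos_sq_le_mul_sq_iff {ι : Type*} {a b : ι → ℝ} (ha : ∀ i, 0 ≤ a i)
    (hb : ∀ i, 0 ≤ b i) :
    (∃ r, 0 < r ∧ ∀ i, a i ^ 2 ≤ r * b i ^ 2) ↔ ∃ C, ∀ i, a i ≤ C * b i := by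
  constructor
  · rintro ⟨r, hr, h⟩
    refine ⟨√r, fun i => ?_⟩
    rw [← Real.sqrt_sq (hb i), ← Real.sqrt_mul hr.le]
    exact Real.le_sqrt_of_sq_le (h i)
  · rintro ⟨C, h⟩
    refine ⟨C ^ 2 + 1, by positivity, fun i => ?_⟩
    calc a i ^ 2 ≤ (C * b i) ^ 2 := pow_le_pow_left₀ (ha i) (h i) 2
      _ = C ^ 2 * b i ^ 2 := mul_pow _ _ _
      _ ≤ (C ^ 2 + 1) * b i ^ 2 := by nlinarith [sq_nonneg (b i)]

section WeakBoundedness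

variable {𝕜 E ι : Type*} [RCLike 𝕜] [NormedAddCommGroup E] [InnerProductSpace 𝕜 E]
  {v : ι → E} {c : ι → ℝ}

lemma exists_norm_le_mul_of_forall_norm_inner_le_mul [CompleteSpace E] (hc : ∀ i, 0 ≤ c i)
    (h : ∀ β, ∃ C, ∀ i, ‖⟪β, v i⟫_𝕜‖ ≤ C * c i) : ∃ C, ∀ i, ‖v i‖ ≤ C * c i := by
  let g : ι → E →L[𝕜] 𝕜 := fun i => ((c i : 𝕜)⁻¹) • innerSL 𝕜 (v i)
  have hg_apply : ∀ i β, ‖g i β‖ = (c i)⁻¹ * ‖⟪β, v i⟫_𝕜‖ := fun i β => by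
    simp only [g, FunLike.coe_smul, Pi.smul_apply, innerSL_apply_apply, norm_smul,
      norm_inv, RCLike.norm_ofReal, abs_of_nonneg (hc i), norm_inner_symm]
  have hg_norm : ∀ i, ‖g i‖ = (c i)⁻¹ * ‖v i‖ := fun i => by
    simp only [g, norm_smul, norm_inv, RCLike.norm_ofReal, abs_of_nonneg (hc i),
      innerSL_apply_norm]
  obtain ⟨C, hC⟩ := banach_steinhaus (g := g) fun β => by
    obtain ⟨C, hC⟩ := h β
    refine ⟨max C 0, fun i => ?_⟩
    rcases (hc i).eq_or_lt with hi | hi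
    · simp [hg_apply, ← hi]
    · rw [hg_apply, inv_mul_le_iff₀ hi, mul_comm (c i)]
      exact (hC i).trans (mul_le_mul_of_nonneg_right (le_max_left C 0) (hc i))
  refine ⟨C, fun i => ?_⟩
  rcases (hc i).eq_or_lt with hi | hi
  · obtain ⟨C', hC'⟩ := h (v i)
    simpa [← hi] using hC' i
  · have := hC i
    rwa [hg_norm, inv_mul_le_iff₀ hi, mul_comm] at this

lemma exists_norm_le_mul_iff_forall_exists_norm_inner_le_mul [CompleteSpace E]
    (hc : ∀ i, 0 ≤ c i) :
    (∃ C, ∀ i, ‖v i‖ ≤ C * c i) ↔ ∀ β, ∃ C, ∀ i, ‖⟪β, v i⟫_𝕜‖ ≤ C * c i := by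
  refine ⟨fun ⟨C, hC⟩ β => ⟨‖β‖ * C, fun i => ?_⟩,
    exists_norm_le_mul_of_forall_norm_inner_le_mul hc⟩
  calc ‖⟪β, v i⟫_𝕜‖ ≤ ‖β‖ * ‖v i‖ := norm_inner_le_norm _ _
    _ ≤ ‖β‖ * (C * c i) := mul_le_mul_of_nonneg_left (hC i) (norm_nonneg β)
    _ = ‖β‖ * C * c i := (mul_assoc _ _ _).symm

end WeakBoundedness

theorem stmt1_general {A : Type*} [NormedRing A] [StarRing A]
    [NormedAlgebra ℂ A]
    {H : Type*} [NormedAddCommGroup H] [InnerProductSpace ℂ H] [CompleteSpace H]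
    {L : Type*} [NormedAddCommGroup L] [InnerProductSpace ℂ L]
    (ρ : A →⋆ₐ[ℂ] (H →L[ℂ] H))
    (D : Submodule ℂ A)
    (Λ : D →ₗ[ℂ] L)
    (α : H) :
    (∃ r : ℝ, 0 < r ∧ ∀ x : D, ‖ρ (x : A) α‖ ^ 2 ≤ r * ‖Λ x‖ ^ 2) ↔
      (∀ β : H, ∃ r : ℝ, 0 < r ∧
        ∀ x : D, ‖(inner ℂ β (ρ (x : A) α) : ℂ)‖ ^ 2 ≤ r * ‖Λ x‖ ^ 2) := by
  have hΛ : ∀ x : D, 0 ≤ ‖Λ x‖ := fun x => norm_nonneg _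
  simp only [exists_pos_sq_le_mul_sq_iff (fun _ => norm_nonneg _) hΛ]
  exact exists_norm_le_mul_iff_forall_exists_norm_inner_le_mul hΛ

/-- Let `ρ : A → B(H)` be a *-representation of a C*-algebra, `D ⊆ A` a dense left ideal,
`Λ : D → L` a linear map into a Hilbert space.  A vector `α ∈ H` is bounded
(`∃ r > 0, ‖ρ(x)α‖² ≤ r ‖Λ x‖²` for all `x ∈ D`) if and only if it is square-integrable
(for every `β ∈ H` there is `r_β > 0` with `|⟪β, ρ(x)α⟫|² ≤ r_β ‖Λ x‖²` for all `x ∈ D`). -/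
theorem stmt1 {A : Type*} [NormedRing A] [StarRing A] [CStarRing A]
    [NormedAlgebra ℂ A] [StarModule ℂ A] [CompleteSpace A]
    {H : Type*} [NormedAddCommGroup H] [InnerProductSpace ℂ H] [CompleteSpace H]
    {L : Type*} [NormedAddCommGroup L] [InnerProductSpace ℂ L] [CompleteSpace L]
    (ρ : A →⋆ₐ[ℂ] (H →L[ℂ] H))
    (D : Submodule ℂ A) (hDdense : Dense (D : Set A))
    (hDideal : ∀ a : A, ∀ x ∈ D, a * x ∈ D)
    (Λ : D →ₗ[ℂ] L) (hΛdense : DenseRange Λ)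
    (α : H) :
    (∃ r : ℝ, 0 < r ∧ ∀ x : D, ‖ρ (x : A) α‖ ^ 2 ≤ r * ‖Λ x‖ ^ 2) ↔
      (∀ β : H, ∃ r : ℝ, 0 < r ∧
        ∀ x : D, ‖(inner ℂ β (ρ (x : A) α) : ℂ)‖ ^ 2 ≤ r * ‖Λ x‖ ^ 2) :=
  stmt1_general ρ D Λ α
end

section
/- Let G be a compact group with normalized Haar measure, and let π : G → U(H), π' : G → U(H') be irreducible unitary representations on finite-dimensional Hilbert spaces that are not equivalent. Then for all α, β ∈ H and γ, δ ∈ H', the matrix coefficients are orthogonal in L²(G): ∫_G ⟨π(g)α, β⟩ · conj(⟨π'(g)γ, δ⟩) dg = 0. -/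
/-!
Average the rank-one operator `S = rankOne α γ` (that is, `x ↦ ⟪γ, x⟫ α`) over the group:
`T = ∫ π g ∘ S ∘ π' g⁻¹ dμ`. Left invariance of `μ` makes `T` an intertwiner from `π'` to `π`,
and unitarity of `π'` gives `⟪T δ, β⟫ = ∫ ⟪π g α, β⟫ · conj ⟪π' g γ, δ⟫ dμ`. Schur's lemma
kills `T`: by irreducibility of `π'` the self-intertwiner `T† T` is a scalar `c`, so `T` scales
all norms by `√c`, and by irreducibility of `π` a nonzero `T` is onto; then `T / √c` would be a
unitary equivalence.
-/

open MeasureTheory InnerProductSpace ContinuousLinearMap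

section Representation

variable {G : Type*} [Group G]
  {E : Type*} [NormedAddCommGroup E] [InnerProductSpace ℂ E]
  {F : Type*} [NormedAddCommGroup F] [InnerProductSpace ℂ F]

def IsUnitaryRep (ρ : G →* (E →L[ℂ] E)) : Prop :=
  ∀ g x y, inner ℂ (ρ g x) (ρ g y) = inner ℂ x y

def IsIrreducibleRep (ρ : G →* (E →L[ℂ] E)) : Prop :=
  ∀ V : Submodule ℂ E, IsClosed (V : Set E) → (∀ g, ∀ v ∈ V, ρ g v ∈ V) → V = ⊥ ∨ V = ⊤

def Intertwines (ρ : G →* (E →L[ℂ] E)) (σ : G →* (F →L[ℂ] F)) (T : E → F) : Prop :=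
  ∀ g x, T (ρ g x) = σ g (T x)

lemma map_apply_map_inv_apply (ρ : G →* (E →L[ℂ] E)) (g : G) (x : E) : ρ g (ρ g⁻¹ x) = x := by
  change (ρ g * ρ g⁻¹) x = x
  rw [← map_mul, mul_inv_cancel, map_one]
  rfl

lemma map_inv_apply_map_apply (ρ : G →* (E →L[ℂ] E)) (g : G) (x : E) : ρ g⁻¹ (ρ g x) = x := by
  simpa using map_apply_map_inv_apply ρ g⁻¹ x

lemma IsUnitaryRep.inner_map_inv_apply_left {ρ : G →* (E →L[ℂ] E)} (hρ : IsUnitaryRep ρ)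
    (g : G) (x y : E) : inner ℂ (ρ g⁻¹ x) y = inner ℂ x (ρ g y) := by
  rw [← hρ g, map_apply_map_inv_apply]

lemma IsUnitaryRep.inner_map_inv_apply_right {ρ : G →* (E →L[ℂ] E)} (hρ : IsUnitaryRep ρ)
    (g : G) (x y : E) : inner ℂ x (ρ g⁻¹ y) = inner ℂ (ρ g x) y := by
  rw [← hρ g, map_apply_map_inv_apply]

lemma Intertwines.adjoint [CompleteSpace E] [CompleteSpace F]
    {ρ : G →* (E →L[ℂ] E)} {σ : G →* (F →L[ℂ] F)} (hρ : IsUnitaryRep ρ) (hσ : IsUnitaryRep σ)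
    {T : E →L[ℂ] F} (hT : Intertwines ρ σ T) :
    Intertwines σ ρ (ContinuousLinearMap.adjoint T) := by
  intro g y
  refine ext_inner_left ℂ fun x => ?_
  rw [adjoint_inner_right, ← hσ.inner_map_inv_apply_left, ← hT, ← adjoint_inner_right,
    hρ.inner_map_inv_apply_left]

lemma Intertwines.comp {K : Type*} [NormedAddCommGroup K] [InnerProductSpace ℂ K]
    {ρ : G →* (E →L[ℂ] E)} {σ : G →* (F →L[ℂ] F)} {τ : G →* (K →L[ℂ] K)}
    {S : F → K} {T : E → F}
    (hS : Intertwines σ τ S) (hT : Intertwines ρ σ T) : Intertwines ρ τ (S ∘ T) := by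
  intro g x
  simp only [Function.comp_apply, hT g x, hS g]

lemma Intertwines.symm {ρ : G →* (E →L[ℂ] E)} {σ : G →* (F →L[ℂ] F)} {U : E ≃ₗᵢ[ℂ] F}
    (hU : Intertwines ρ σ U) : Intertwines σ ρ U.symm := by
  intro g y
  apply U.injective
  rw [U.apply_symm_apply, hU, U.apply_symm_apply]

lemma IsIrreducibleRep.exists_eq_smul [FiniteDimensional ℂ E] {ρ : G →* (E →L[ℂ] E)}
    (hρ : IsIrreducibleRep ρ) {A : E →L[ℂ] E} (hA : Intertwines ρ ρ A) :
    ∃ c : ℂ, ∀ x, A x = c • x := by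
  cases subsingleton_or_nontrivial E
  · exact ⟨0, fun x => Subsingleton.elim _ _⟩
  obtain ⟨c, hc⟩ := Module.End.exists_eigenvalue (A : E →ₗ[ℂ] E)
  refine ⟨c, fun x => Module.End.mem_eigenspace_iff.mp ?_⟩
  have hinv : ∀ g, ∀ v ∈ Module.End.eigenspace (A : E →ₗ[ℂ] E) c,
      ρ g v ∈ Module.End.eigenspace (A : E →ₗ[ℂ] E) c := by
    intro g v hv
    rw [Module.End.mem_eigenspace_iff] at hv ⊢
    simp only [coe_coe] at hv ⊢
    rw [hA, hv, map_smul]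
  rcases hρ _ (Submodule.closed_of_finiteDimensional _) hinv with h | h
  · exact absurd h hc
  · exact h ▸ Submodule.mem_top

lemma IsIrreducibleRep.surjective_of_intertwines [FiniteDimensional ℂ F]
    {ρ : G →* (E →L[ℂ] E)} {σ : G →* (F →L[ℂ] F)} (hσ : IsIrreducibleRep σ)
    {T : E →L[ℂ] F} (hT : Intertwines ρ σ T) (hT0 : T ≠ 0) :
    Function.Surjective T := by
  have hinv : ∀ g, ∀ v ∈ LinearMap.range (T : E →ₗ[ℂ] F),
      σ g v ∈ LinearMap.range (T : E →ₗ[ℂ] F) := by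
    rintro g _ ⟨x, rfl⟩
    exact ⟨ρ g x, hT g x⟩
  rcases hσ _ (Submodule.closed_of_finiteDimensional _) hinv with h | h
  · exact absurd (coe_injective (LinearMap.range_eq_bot.mp h)) hT0
  · exact LinearMap.range_eq_top.mp h

end Representation

lemma norm_apply_eq_sqrt_mul_norm_of_adjoint_comp_self {𝕜 : Type*} [RCLike 𝕜]
    {E : Type*} [NormedAddCommGroup E] [InnerProductSpace 𝕜 E] [CompleteSpace E]
    {F : Type*} [NormedAddCommGroup F] [InnerProductSpace 𝕜 F] [CompleteSpace F]
    {T : E →L[𝕜] F} {c : 𝕜}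
    (hc : ∀ x, (ContinuousLinearMap.adjoint T ∘L T) x = c • x) (x : E) :
    ‖T x‖ = √(RCLike.re c) * ‖x‖ := by
  rw [apply_norm_eq_sqrt_inner_adjoint_right, hc, inner_smul_right, inner_self_eq_norm_sq_to_K,
    ← RCLike.ofReal_pow, RCLike.re_mul_ofReal, Real.sqrt_mul' _ (sq_nonneg _),
    Real.sqrt_sq (norm_nonneg _)]

lemma exists_linearIsometryEquiv_eq_smul {𝕜 : Type*} [RCLike 𝕜]
    {E : Type*} [NormedAddCommGroup E] [NormedSpace 𝕜 E]
    {F : Type*} [NormedAddCommGroup F] [NormedSpace 𝕜 F] {T : E →L[𝕜] F}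
    (hT : Function.Surjective T) {t : ℝ} (ht : 0 < t) (hnorm : ∀ x, ‖T x‖ = t * ‖x‖) :
    ∃ U : E ≃ₗᵢ[𝕜] F, ∀ x, U x = (t⁻¹ : 𝕜) • T x := by
  have htK : (t : 𝕜) ≠ 0 := RCLike.ofReal_ne_zero.mpr ht.ne'
  let V : E →ₗᵢ[𝕜] F :=
    { toLinearMap := (t⁻¹ : 𝕜) • (T : E →ₗ[𝕜] F)
      norm_map' := fun x => by
        simp [norm_smul, hnorm, abs_of_pos ht, ht.ne'] }
  refine ⟨LinearIsometryEquiv.ofSurjective V fun y => ?_, fun x => rfl⟩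
  obtain ⟨x, rfl⟩ := hT y
  refine ⟨(t : 𝕜) • x, ?_⟩
  change (t⁻¹ : 𝕜) • T ((t : 𝕜) • x) = T x
  rw [map_smul, smul_smul, inv_mul_cancel₀ htK, one_smul]

section Schur

variable {G : Type*} [Group G]
  {E : Type*} [NormedAddCommGroup E] [InnerProductSpace ℂ E] [FiniteDimensional ℂ E]
  {F : Type*} [NormedAddCommGroup F] [InnerProductSpace ℂ F] [FiniteDimensional ℂ F]
  {ρ : G →* (E →L[ℂ] E)} {σ : G →* (F →L[ℂ] F)}

theorem exists_intertwining_linearIsometryEquiv (hρ : IsUnitaryRep ρ) (hσ : IsUnitaryRep σ)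
    (hρi : IsIrreducibleRep ρ) (hσi : IsIrreducibleRep σ) {T : E →L[ℂ] F}
    (hT : Intertwines ρ σ T) (hT0 : T ≠ 0) : ∃ U : E ≃ₗᵢ[ℂ] F, Intertwines ρ σ U := by
  obtain ⟨c, hc⟩ := hρi.exists_eq_smul (A := adjoint T ∘L T) ((hT.adjoint hρ hσ).comp hT)
  have hnorm := norm_apply_eq_sqrt_mul_norm_of_adjoint_comp_self hc
  have ht : 0 < √(RCLike.re c) := by
    obtain ⟨x, hx⟩ : ∃ x, T x ≠ 0 := by
      by_contra! h
      exact hT0 (ext h)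
    refine (Real.sqrt_nonneg _).lt_of_ne fun h => hx ?_
    rw [← norm_eq_zero, hnorm, ← h, zero_mul]
  obtain ⟨U, hU⟩ :=
    exists_linearIsometryEquiv_eq_smul (hσi.surjective_of_intertwines hT hT0) ht hnorm
  refine ⟨U, fun g x => ?_⟩
  rw [hU, hU, hT, map_smul]

end Schur

lemma integral_inner_left {X : Type*} [MeasurableSpace X] {μ : Measure X}
    {E : Type*} [NormedAddCommGroup E] [InnerProductSpace ℂ E] [CompleteSpace E]
    {f : X → E} (hf : Integrable f μ) (c : E) :
    ∫ x, inner ℂ (f x) c ∂μ = inner ℂ (∫ x, f x ∂μ) c := by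
  rw [← inner_conj_symm _ c, ← integral_inner hf, ← integral_conj]
  simp_rw [inner_conj_symm]

section Averaging

variable {G : Type*} [Group G] [TopologicalSpace G] [IsTopologicalGroup G] [CompactSpace G]
  [MeasurableSpace G] [BorelSpace G] (μ : Measure G) [IsFiniteMeasure μ]
  {E : Type*} [NormedAddCommGroup E] [InnerProductSpace ℂ E] [FiniteDimensional ℂ E]
  {F : Type*} [NormedAddCommGroup F] [InnerProductSpace ℂ F] [FiniteDimensional ℂ F]
  {ρ : G →* (E →L[ℂ] E)} {σ : G →* (F →L[ℂ] F)}

noncomputable def averagedOperator (ρ : G →* (E →L[ℂ] E)) (σ : G →* (F →L[ℂ] F))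
    (S : E →L[ℂ] F) : E →L[ℂ] F :=
  ∫ g, σ g ∘L S ∘L ρ g⁻¹ ∂μ

variable (hρc : ∀ x, Continuous fun g => ρ g x) (hσc : ∀ y, Continuous fun g => σ g y)
include hρc hσc

lemma integrable_averagedOperator_integrand (S : E →L[ℂ] F) :
    Integrable (fun g => σ g ∘L S ∘L ρ g⁻¹) μ := by
  have hρ : Continuous (ρ : G → E →L[ℂ] E) := continuous_clm_apply.mpr hρc
  have hσ : Continuous (σ : G → F →L[ℂ] F) := continuous_clm_apply.mpr hσc
  exact ((hσ.clm_comp continuous_const).clm_comp (hρ.comp continuous_inv))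
    |>.integrable_of_hasCompactSupport (HasCompactSupport.of_compactSpace _)

lemma averagedOperator_apply (S : E →L[ℂ] F) (x : E) :
    averagedOperator μ ρ σ S x = ∫ g, σ g (S (ρ g⁻¹ x)) ∂μ :=
  integral_apply (integrable_averagedOperator_integrand μ hρc hσc S) x

lemma intertwines_averagedOperator [μ.IsMulLeftInvariant] (S : E →L[ℂ] F) :
    Intertwines ρ σ (averagedOperator μ ρ σ S) := by
  intro h x
  have hint : Integrable (fun g => σ g (S (ρ g⁻¹ x))) μ :=
    (integrable_averagedOperator_integrand μ hρc hσc S).apply_continuousLinearMap x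
  calc averagedOperator μ ρ σ S (ρ h x)
      = ∫ g, σ (h * g) (S (ρ (h * g)⁻¹ (ρ h x))) ∂μ := by
        rw [averagedOperator_apply μ hρc hσc,
          integral_mul_left_eq_self (fun g => σ g (S (ρ g⁻¹ (ρ h x)))) h]
    _ = ∫ g, σ h (σ g (S (ρ g⁻¹ x))) ∂μ := by
        simp only [mul_inv_rev, map_mul, mul_apply_eq_comp, map_inv_apply_map_apply]
    _ = σ h (averagedOperator μ ρ σ S x) := by
        rw [integral_comp_comm _ hint, averagedOperator_apply μ hρc hσc]

lemma inner_averagedOperator_rankOne_apply (hρ : IsUnitaryRep ρ) (α : F) (γ δ : E) (β : F) :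
    inner ℂ (averagedOperator μ ρ σ (rankOne ℂ α γ) δ) β
      = ∫ g, inner ℂ (σ g α) β * (starRingEnd ℂ) (inner ℂ (ρ g γ) δ) ∂μ := by
  have hint : Integrable (fun g => σ g (rankOne ℂ α γ (ρ g⁻¹ δ))) μ :=
    (integrable_averagedOperator_integrand μ hρc hσc (rankOne ℂ α γ)).apply_continuousLinearMap δ
  rw [averagedOperator_apply μ hρc hσc, ← integral_inner_left hint]
  simp only [rankOne_apply, map_smul, inner_smul_left, hρ.inner_map_inv_apply_right, mul_comm]

end Averaging

theorem stmt5_general {G : Type*} [Group G] [TopologicalSpace G] [IsTopologicalGroup G]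
    [CompactSpace G] [MeasurableSpace G] [BorelSpace G]
    (μ : Measure G) [μ.IsHaarMeasure]
    {H : Type*} [NormedAddCommGroup H] [InnerProductSpace ℂ H] [FiniteDimensional ℂ H]
    {H' : Type*} [NormedAddCommGroup H'] [InnerProductSpace ℂ H'] [FiniteDimensional ℂ H']
    (π : G →* (H →L[ℂ] H)) (π' : G →* (H' →L[ℂ] H'))
    (hπu : ∀ (g : G) (x y : H), (inner ℂ (π g x) (π g y) : ℂ) = inner ℂ x y)
    (hπ'u : ∀ (g : G) (x y : H'), (inner ℂ (π' g x) (π' g y) : ℂ) = inner ℂ x y)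
    (hπc : ∀ x : H, Continuous fun g => π g x)
    (hπ'c : ∀ x : H', Continuous fun g => π' g x)
    (hirr : ∀ V : Submodule ℂ H, IsClosed (V : Set H) →
      (∀ g : G, ∀ v ∈ V, π g v ∈ V) → V = ⊥ ∨ V = ⊤)
    (hirr' : ∀ V : Submodule ℂ H', IsClosed (V : Set H') →
      (∀ g : G, ∀ v ∈ V, π' g v ∈ V) → V = ⊥ ∨ V = ⊤)
    (hneq : ¬ ∃ U : H ≃ₗᵢ[ℂ] H', ∀ (g : G) (x : H), U (π g x) = π' g (U x))
    (α β : H) (γ δ : H') :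
    ∫ g, (inner ℂ (π g α) β : ℂ) * (starRingEnd ℂ) (inner ℂ (π' g γ) δ) ∂μ = 0 := by
  have hT0 : averagedOperator μ π' π (rankOne ℂ α γ) = 0 := by
    by_contra hT0
    obtain ⟨U, hU⟩ := exists_intertwining_linearIsometryEquiv hπ'u hπu hirr' hirr
      (intertwines_averagedOperator μ hπ'c hπc _) hT0
    exact hneq ⟨U.symm, hU.symm⟩
  rw [← inner_averagedOperator_rankOne_apply μ hπ'c hπc hπ'u, hT0, zero_apply, inner_zero_left]

/-- First Schur orthogonality relation: matrix coefficients of two inequivalent irreducible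
finite-dimensional unitary representations of a compact group are orthogonal in `L²(G)`
with respect to the normalized Haar measure. -/
theorem stmt5 {G : Type*} [Group G] [TopologicalSpace G] [IsTopologicalGroup G]
    [CompactSpace G] [MeasurableSpace G] [BorelSpace G]
    (μ : Measure G) [μ.IsHaarMeasure] [IsProbabilityMeasure μ]
    {H : Type*} [NormedAddCommGroup H] [InnerProductSpace ℂ H] [FiniteDimensional ℂ H]
    {H' : Type*} [NormedAddCommGroup H'] [InnerProductSpace ℂ H'] [FiniteDimensional ℂ H']
    (π : G →* (H →L[ℂ] H)) (π' : G →* (H' →L[ℂ] H'))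
    (hπu : ∀ (g : G) (x y : H), (inner ℂ (π g x) (π g y) : ℂ) = inner ℂ x y)
    (hπ'u : ∀ (g : G) (x y : H'), (inner ℂ (π' g x) (π' g y) : ℂ) = inner ℂ x y)
    (hπc : ∀ x : H, Continuous fun g => π g x)
    (hπ'c : ∀ x : H', Continuous fun g => π' g x)
    (hirr : ∀ V : Submodule ℂ H, IsClosed (V : Set H) →
      (∀ g : G, ∀ v ∈ V, π g v ∈ V) → V = ⊥ ∨ V = ⊤)
    (hirr' : ∀ V : Submodule ℂ H', IsClosed (V : Set H') →
      (∀ g : G, ∀ v ∈ V, π' g v ∈ V) → V = ⊥ ∨ V = ⊤)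
    (hneq : ¬ ∃ U : H ≃ₗᵢ[ℂ] H', ∀ (g : G) (x : H), U (π g x) = π' g (U x))
    (α β : H) (γ δ : H') :
    ∫ g, (inner ℂ (π g α) β : ℂ) * (starRingEnd ℂ) (inner ℂ (π' g γ) δ) ∂μ = 0 :=
  stmt5_general μ π π' hπu hπ'u hπc hπ'c hirr hirr' hneq α β γ δ
end

section
/- Let G be a locally compact group with left Haar measure, π : G → U(H) a strongly continuous unitary representation, and ξ ∈ H a vector such that for every β ∈ H the coefficient function g ↦ ⟨π(g)ξ, β⟩ lies in L²(G). Then the linear map ⟨ξ| : H → L²(G), β ↦ (g ↦ ⟨π(g)ξ, β⟩), is bounded. -/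
/-!
Since every evaluation `x ↦ ℓ a x` is continuous, `L^p` convergence of `a ↦ ℓ a xₙ` to some `f`
along `xₙ → x` forces `f = ℓ · x` almost everywhere (pass to an a.e. convergent subsequence).
Hence the coefficient map into `L^p` has closed graph and is bounded by the closed graph theorem.
-/

open MeasureTheory Filter Topology

namespace MeasureTheory

variable {α 𝕜 E F : Type*} [MeasurableSpace α] {μ : Measure α} {p : ENNReal}
  [NontriviallyNormedField 𝕜] [NormedAddCommGroup E] [NormedSpace 𝕜 E]
  [NormedAddCommGroup F] [NormedSpace 𝕜 F]

noncomputable def coeffToLp (ℓ : α → E →L[𝕜] F) (hℓ : ∀ x, MemLp (fun a => ℓ a x) p μ) :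
    E →ₗ[𝕜] Lp F p μ where
  toFun x := (hℓ x).toLp _
  map_add' x y := by
    rw [← MemLp.toLp_add]
    exact MemLp.toLp_congr _ _ (.of_forall fun a => map_add (ℓ a) x y)
  map_smul' c x := by
    rw [RingHom.id_apply, ← MemLp.toLp_const_smul]
    exact MemLp.toLp_congr _ _ (.of_forall fun a => map_smul (ℓ a) c x)

theorem continuous_coeffToLp [Fact (1 ≤ p)] [CompleteSpace E] [CompleteSpace F]
    (ℓ : α → E →L[𝕜] F) (hℓ : ∀ x, MemLp (fun a => ℓ a x) p μ) : Continuous (coeffToLp ℓ hℓ) := by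
  refine (coeffToLp ℓ hℓ).continuous_of_seq_closed_graph fun u x f hu hf => ?_
  obtain ⟨ns, hns, hf_ae⟩ := (tendstoInMeasure_of_tendsto_Lp hf).exists_seq_tendsto_ae
  have hcoe : ∀ᵐ a ∂μ, ∀ n, coeffToLp ℓ hℓ (u n) a = ℓ a (u n) :=
    ae_all_iff.2 fun n => (hℓ (u n)).coeFn_toLp
  refine Lp.ext ?_
  filter_upwards [hf_ae, hcoe, (hℓ x).coeFn_toLp] with a hfa hcoe_a hx
  have hlim : Tendsto (fun i => ℓ a (u (ns i))) atTop (𝓝 (ℓ a x)) :=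
    ((ℓ a).continuous.tendsto x).comp (hu.comp hns.tendsto_atTop)
  have hfa' : Tendsto (fun i => ℓ a (u (ns i))) atTop (𝓝 (f a)) := by
    simpa only [Function.comp_apply, hcoe_a] using hfa
  exact (tendsto_nhds_unique hfa' hlim).trans hx.symm

theorem exists_eLpNorm_apply_le [Fact (1 ≤ p)] [CompleteSpace E] [CompleteSpace F]
    (ℓ : α → E →L[𝕜] F) (hℓ : ∀ x, MemLp (fun a => ℓ a x) p μ) :
    ∃ C : ℝ, 0 ≤ C ∧ ∀ x, eLpNorm (fun a => ℓ a x) p μ ≤ ENNReal.ofReal (C * ‖x‖) := by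
  let T : E →L[𝕜] Lp F p μ := ⟨coeffToLp ℓ hℓ, continuous_coeffToLp ℓ hℓ⟩
  refine ⟨‖T‖, norm_nonneg _, fun x => ?_⟩
  have hTx : ‖(hℓ x).toLp _‖ ≤ ‖T‖ * ‖x‖ := T.le_opNorm x
  rw [Lp.norm_toLp] at hTx
  rw [← ENNReal.ofReal_toReal (hℓ x).eLpNorm_ne_top]
  exact ENNReal.ofReal_le_ofReal hTx

end MeasureTheory

theorem stmt7_general {G : Type*} [Group G] [MeasurableSpace G]
    (μ : Measure G)
    {H : Type*} [NormedAddCommGroup H] [InnerProductSpace ℂ H] [CompleteSpace H]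
    (π : G →* (H →L[ℂ] H))
    (ξ : H) (hξ : ∀ β : H, MemLp (fun g => (inner ℂ (π g ξ) β : ℂ)) 2 μ) :
    ∃ C : ℝ, 0 ≤ C ∧ ∀ β : H,
      eLpNorm (fun g => (inner ℂ (π g ξ) β : ℂ)) 2 μ ≤ ENNReal.ofReal (C * ‖β‖) :=
  exists_eLpNorm_apply_le (fun g => innerSL ℂ (π g ξ)) hξ

/-- If `π` is a strongly continuous unitary representation of a locally compact group `G` on a
Hilbert space `H` and `ξ ∈ H` is such that all coefficient functions `g ↦ ⟪π g ξ, β⟫` lie in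
`L²(G)` (left Haar measure), then the map `β ↦ (g ↦ ⟪π g ξ, β⟫)` is bounded into `L²(G)`. -/
theorem stmt7 {G : Type*} [Group G] [TopologicalSpace G] [IsTopologicalGroup G]
    [LocallyCompactSpace G] [MeasurableSpace G] [BorelSpace G]
    (μ : Measure G) [μ.IsHaarMeasure]
    {H : Type*} [NormedAddCommGroup H] [InnerProductSpace ℂ H] [CompleteSpace H]
    (π : G →* (H →L[ℂ] H))
    (hπu : ∀ (g : G) (x y : H), (inner ℂ (π g x) (π g y) : ℂ) = inner ℂ x y)
    (hπc : ∀ x : H, Continuous fun g => π g x)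
    (ξ : H) (hξ : ∀ β : H, MemLp (fun g => (inner ℂ (π g ξ) β : ℂ)) 2 μ) :
    ∃ C : ℝ, 0 ≤ C ∧ ∀ β : H,
      eLpNorm (fun g => (inner ℂ (π g ξ) β : ℂ)) 2 μ ≤ ENNReal.ofReal (C * ‖β‖) :=
  stmt7_general μ π ξ hξ
end

section
/- Let B be a C*-algebra, H a Hilbert B-module, and (x_i)_{i∈I} an increasing net of positive elements of the multiplier algebra M(B) (equivalently, of adjointable operators B(B) on B viewed as a Hilbert module over itself), bounded above in norm. Then (x_i) converges in the strict topology of M(B) to some y ∈ M(B) if and only if for every b ∈ B the net (b* x_i b) converges in norm in B, and in that case b* y b = lim b* x_i b. -/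
/-!
For `i ≤ j` write `x j - x i = c* c`. With `d = c* c` the C*-identity gives
`‖d b‖² ≤ ‖c‖² ‖c b‖² = ‖d‖ ‖b* d b‖ ≤ 2M ‖b* x_j b - b* x_i b‖`,
so norm convergence of `b* x_i b` makes `x_i b` norm-Cauchy. The pointwise limits of the
uniformly bounded left and right centralizers `x_i` (the right one is the left one conjugated
by `star`, since each `x_i` is selfadjoint) form a double centralizer, the strict limit `y`.
-/

open MultiplierAlgebra Filter Topology

theorem Metric.cauchySeq_of_dist_sq_le {ι α β : Type*} [Nonempty ι] [SemilatticeSup ι]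
    [PseudoMetricSpace α] [PseudoMetricSpace β] {s : ι → α} {t : ι → β} (C : ℝ)
    (hst : ∀ i j, i ≤ j → dist (s j) (s i) ^ 2 ≤ C * dist (t j) (t i)) (ht : CauchySeq t) :
    CauchySeq s := by
  rw [Metric.cauchySeq_iff'] at ht ⊢
  intro ε hε
  obtain ⟨N, hN⟩ := ht (ε ^ 2 / (|C| + 1)) (by positivity)
  refine ⟨N, fun n hn => lt_of_pow_lt_pow_left₀ 2 hε.le ?_⟩
  calc dist (s n) (s N) ^ 2 ≤ |C| * dist (t n) (t N) :=
        (hst N n hn).trans (mul_le_mul_of_nonneg_right (le_abs_self C) dist_nonneg)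
    _ ≤ |C| * (ε ^ 2 / (|C| + 1)) := mul_le_mul_of_nonneg_left (hN n hn).le (abs_nonneg C)
    _ < ε ^ 2 := by
        rw [mul_div_assoc', div_lt_iff₀ (by positivity)]
        nlinarith [abs_nonneg C, sq_pos_of_pos hε]

theorem ContinuousLinearMap.exists_coe_eq_of_tendsto_of_norm_le {ι 𝕜 E F : Type*}
    [NontriviallyNormedField 𝕜] [SeminormedAddCommGroup E] [NormedSpace 𝕜 E]
    [NormedAddCommGroup F] [NormedSpace 𝕜 F] {l : Filter ι} [l.NeBot]
    {g : ι → E →L[𝕜] F} {f : E → F} {M : ℝ} (hg : ∀ i, ‖g i‖ ≤ M)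
    (hgf : ∀ e, Tendsto (fun i => g i e) l (𝓝 (f e))) : ∃ T : E →L[𝕜] F, ⇑T = f := by
  let L := linearMapOfTendsto f (fun i => (g i : E →ₗ[𝕜] F)) (tendsto_pi_nhds.2 hgf)
  refine ⟨L.mkContinuous M fun e => le_of_tendsto (hgf e).norm ?_, rfl⟩
  exact Eventually.of_forall fun i => (g i).le_of_opNorm_le (hg i) e

namespace DoubleCentralizer

section

variable {𝕜 A : Type*} [NontriviallyNormedField 𝕜] [NonUnitalNormedRing A] [StarRing A]
  [CStarRing A] [NormedSpace 𝕜 A] [SMulCommClass 𝕜 A A] [IsScalarTower 𝕜 A A]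

theorem exists_fst_snd_eq_of_tendsto {ι : Type*} {l : Filter ι} [l.NeBot]
    {x : ι → 𝓜(𝕜, A)} {M : ℝ} (hM : ∀ i, ‖x i‖ ≤ M) {F G : A → A}
    (hF : ∀ b, Tendsto (fun i => (x i).fst b) l (𝓝 (F b)))
    (hG : ∀ b, Tendsto (fun i => (x i).snd b) l (𝓝 (G b))) :
    ∃ y : 𝓜(𝕜, A), ⇑y.fst = F ∧ ⇑y.snd = G := by
  obtain ⟨T, rfl⟩ := ContinuousLinearMap.exists_coe_eq_of_tendsto_of_norm_le
    (fun i => (norm_fst (x i)).trans_le (hM i)) hF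
  obtain ⟨S, rfl⟩ := ContinuousLinearMap.exists_coe_eq_of_tendsto_of_norm_le
    (fun i => (norm_snd (x i)).trans_le (hM i)) hG
  refine ⟨⟨(T, S), fun a b => tendsto_nhds_unique ?_ (tendsto_const_nhds.mul (hF b))⟩, rfl, rfl⟩
  simpa only [central] using (hG a).mul_const b

theorem snd_apply_of_isSelfAdjoint [StarRing 𝕜] [StarModule 𝕜 A] {a : 𝓜(𝕜, A)}
    (ha : IsSelfAdjoint a) (b : A) :
    a.snd b = star (a.fst (star b)) := by
  rw [← star_snd, ha.star_eq]

end

section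

variable {𝕜 A : Type*} [DenselyNormedField 𝕜] [StarRing 𝕜] [NonUnitalNormedRing A] [StarRing A]
  [CStarRing A] [NormedSpace 𝕜 A] [SMulCommClass 𝕜 A A] [IsScalarTower 𝕜 A A] [StarModule 𝕜 A]

theorem norm_star_mul_self_fst_apply_sq_le (c : 𝓜(𝕜, A)) (b : A) :
    ‖(star c * c).fst b‖ ^ 2 ≤ ‖star c * c‖ * ‖star b * (star c * c).fst b‖ := by
  have hfst : (star c * c).fst b = (star c).fst (c.fst b) := rfl
  have hconj : star b * (star c * c).fst b = star (c.fst b) * c.fst b := by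
    rw [hfst, star_fst, ← star_mul, c.central, star_mul, star_star]
  have hle : ‖(star c * c).fst b‖ ≤ ‖c‖ * ‖c.fst b‖ := by
    simpa only [hfst, norm_fst, norm_star] using (star c).fst.le_opNorm (c.fst b)
  rw [hconj, CStarRing.norm_star_mul_self, CStarRing.norm_star_mul_self]
  nlinarith [mul_le_mul hle hle (norm_nonneg _) (by positivity)]

theorem cauchySeq_fst_apply_of_monotone {ι : Type*} [Nonempty ι] [SemilatticeSup ι]
    {x : ι → 𝓜(𝕜, A)} {M : ℝ} (hM : ∀ i, ‖x i‖ ≤ M)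
    (hmono : ∀ i j, i ≤ j → ∃ c : 𝓜(𝕜, A), x j - x i = star c * c) {b : A}
    (hb : CauchySeq fun i => star b * (x i).fst b) : CauchySeq fun i => (x i).fst b := by
  refine Metric.cauchySeq_of_dist_sq_le (2 * M) (fun i j hij => ?_) hb
  obtain ⟨c, hc⟩ := hmono i j hij
  have hsub : (x j).fst b - (x i).fst b = (star c * c).fst b := by rw [← hc, sub_fst]; rfl
  rw [dist_eq_norm, dist_eq_norm, ← mul_sub, hsub]
  calc ‖(star c * c).fst b‖ ^ 2 ≤ ‖star c * c‖ * ‖star b * (star c * c).fst b‖ :=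
        norm_star_mul_self_fst_apply_sq_le c b
    _ ≤ 2 * M * ‖star b * (star c * c).fst b‖ := by
        gcongr
        rw [← hc]
        linarith [norm_sub_le (x j) (x i), hM i, hM j]

end

end DoubleCentralizer

theorem stmt15_general {B : Type*} [NonUnitalNormedRing B] [StarRing B] [CStarRing B]
    [NormedSpace ℂ B] [SMulCommClass ℂ B B] [IsScalarTower ℂ B B]
    [StarModule ℂ B] [CompleteSpace B]
    {I : Type*} [Nonempty I] [SemilatticeSup I]
    (x : I → 𝓜(ℂ, B))
    (hpos : ∀ i, ∃ c : 𝓜(ℂ, B), x i = star c * c)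
    (hmono : ∀ i j, i ≤ j → ∃ c : 𝓜(ℂ, B), x j - x i = star c * c)
    (hbdd : ∃ M : ℝ, ∀ i, ‖x i‖ ≤ M) :
    ((∃ y : 𝓜(ℂ, B), ∀ b : B,
        Tendsto (fun i => (x i).fst b) atTop (𝓝 (y.fst b)) ∧
        Tendsto (fun i => (x i).snd b) atTop (𝓝 (y.snd b))) ↔
      (∀ b : B, ∃ l : B, Tendsto (fun i => star b * (x i).fst b) atTop (𝓝 l))) ∧
    (∀ y : 𝓜(ℂ, B), (∀ b : B,
        Tendsto (fun i => (x i).fst b) atTop (𝓝 (y.fst b)) ∧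
        Tendsto (fun i => (x i).snd b) atTop (𝓝 (y.snd b))) →
      ∀ b : B, Tendsto (fun i => star b * (x i).fst b) atTop (𝓝 (star b * y.fst b))) := by
  refine ⟨⟨fun ⟨y, hy⟩ b => ⟨_, (hy b).1.const_mul (star b)⟩, fun hconj => ?_⟩,
    fun y hy b => (hy b).1.const_mul (star b)⟩
  obtain ⟨M, hM⟩ := hbdd
  have hfst (b : B) : ∃ l, Tendsto (fun i => (x i).fst b) atTop (𝓝 l) :=
    cauchySeq_tendsto_of_complete <| DoubleCentralizer.cauchySeq_fst_apply_of_monotone hM hmono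
      (hconj b).choose_spec.cauchySeq
  choose F hF using hfst
  have hsa (i : I) : IsSelfAdjoint (x i) := by
    obtain ⟨c, hc⟩ := hpos i
    exact hc ▸ IsSelfAdjoint.star_mul_self c
  have hsnd (b : B) : Tendsto (fun i => (x i).snd b) atTop (𝓝 (star (F (star b)))) := by
    simpa only [DoubleCentralizer.snd_apply_of_isSelfAdjoint (hsa _)] using (hF (star b)).star
  obtain ⟨y, hyF, hyG⟩ := DoubleCentralizer.exists_fst_snd_eq_of_tendsto hM hF hsnd
  exact ⟨y, fun b => ⟨hyF ▸ hF b, hyG ▸ hsnd b⟩⟩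

/-- (Kustermans–Vaes, Result 3.4.)  An increasing, norm-bounded net `(x_i)` of positive
elements of the multiplier algebra `M(B)` of a C*-algebra `B` converges strictly to some
`y ∈ M(B)` if and only if for every `b ∈ B` the net `(b* x_i b)` converges in norm in `B`;
and in that case `b* y b = lim b* x_i b`. -/
theorem stmt15 {B : Type*} [NonUnitalNormedRing B] [StarRing B] [CStarRing B]
    [NormedSpace ℂ B] [SMulCommClass ℂ B B] [IsScalarTower ℂ B B]
    [StarModule ℂ B] [NormedStarGroup B] [CompleteSpace B]
    {I : Type*} [Nonempty I] [SemilatticeSup I]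
    (x : I → 𝓜(ℂ, B))
    (hpos : ∀ i, ∃ c : 𝓜(ℂ, B), x i = star c * c)
    (hmono : ∀ i j, i ≤ j → ∃ c : 𝓜(ℂ, B), x j - x i = star c * c)
    (hbdd : ∃ M : ℝ, ∀ i, ‖x i‖ ≤ M) :
    ((∃ y : 𝓜(ℂ, B), ∀ b : B,
        Tendsto (fun i => (x i).fst b) atTop (𝓝 (y.fst b)) ∧
        Tendsto (fun i => (x i).snd b) atTop (𝓝 (y.snd b))) ↔
      (∀ b : B, ∃ l : B, Tendsto (fun i => star b * (x i).fst b) atTop (𝓝 l))) ∧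
    (∀ y : 𝓜(ℂ, B), (∀ b : B,
        Tendsto (fun i => (x i).fst b) atTop (𝓝 (y.fst b)) ∧
        Tendsto (fun i => (x i).snd b) atTop (𝓝 (y.snd b))) →
      ∀ b : B, Tendsto (fun i => star b * (x i).fst b) atTop (𝓝 (star b * y.fst b))) :=
  stmt15_general x hpos hmono hbdd
end

section
/- Let G be a locally compact group with left Haar measure, π an irreducible strongly continuous unitary representation of G on a Hilbert space H, and ξ ∈ H a nonzero square-integrable vector. Then there exists an isometry V : H → L²(G) intertwining π with the left regular representation; in particular every irreducible square-integrable representation is unitarily equivalent to a subrepresentation of the left regular representation. -/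
/-!
The coefficient map `C x = (g ↦ ⟪π g ξ, x⟫)` has closed graph, hence is a bounded operator
`H → L²(G)`, and left invariance of Haar measure makes it intertwine `π` with the left regular
representation. So `C† C` commutes with `π`; by Schur's lemma it is a scalar `c`, and `c > 0`
because the continuous function `g ↦ ⟪π g ξ, ξ⟫` is nonzero at `1`. Then `c^{-1/2} C` is the
isometry. Schur's lemma is proved with the continuous functional calculus: if the spectrum of the
self-adjoint `S` contained two points, functions `f, g` supported on either side of a point between
them would give a kernel of `cfc g S` that is closed, invariant, nonzero (it contains the range of
`cfc f S`) and proper.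
-/

open MeasureTheory

section Spectrum

variable {A : Type*} [Ring A] [StarRing A] [Algebra ℝ A] [TopologicalSpace A]
  [ContinuousFunctionalCalculus ℝ A IsSelfAdjoint] [Nontrivial A]

lemma cfc_ne_zero_of_mem_spectrum {a : A} (ha : IsSelfAdjoint a) {f : ℝ → ℝ}
    (hf : Continuous f) {x : ℝ} (hx : x ∈ spectrum ℝ a) (hfx : f x ≠ 0) : cfc f a ≠ 0 := by
  intro h
  have hspec := cfc_map_spectrum f a ha hf.continuousOn
  rw [h, spectrum.zero_eq] at hspec
  exact hfx (hspec.symm.subset ⟨x, hx, rfl⟩)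

lemma IsSelfAdjoint.exists_cfc_mul_eq_zero {a : A} (ha : IsSelfAdjoint a)
    (hspec : (spectrum ℝ a).Nontrivial) :
    ∃ f g : ℝ → ℝ, cfc f a ≠ 0 ∧ cfc g a ≠ 0 ∧ cfc g a * cfc f a = 0 := by
  obtain ⟨x, hx, y, hy, hxy⟩ := hspec.exists_lt
  obtain ⟨m, hxm, hmy⟩ := exists_between hxy
  have hf : Continuous fun t : ℝ => max (t - m) 0 := by fun_prop
  have hg : Continuous fun t : ℝ => max (m - t) 0 := by fun_prop
  refine ⟨_, _, cfc_ne_zero_of_mem_spectrum ha hf hy ?_,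
    cfc_ne_zero_of_mem_spectrum ha hg hx ?_, ?_⟩
  · exact (lt_max_of_lt_left (sub_pos.mpr hmy)).ne'
  · exact (lt_max_of_lt_left (sub_pos.mpr hxm)).ne'
  · rw [← cfc_mul _ _ a hg.continuousOn hf.continuousOn]
    refine (cfc_congr fun t _ => ?_).trans (cfc_zero ℝ a)
    rcases le_total t m with htm | htm <;> simp [htm]

end Spectrum

theorem IsSelfAdjoint.exists_eq_algebraMap_of_commute {H : Type*} [NormedAddCommGroup H]
    [InnerProductSpace ℂ H] [CompleteSpace H] [Nontrivial H] {ι : Type*}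
    {u : ι → H →L[ℂ] H}
    (hirr : ∀ W : Submodule ℂ H, IsClosed (W : Set H) →
      (∀ i, ∀ x ∈ W, u i x ∈ W) → W = ⊥ ∨ W = ⊤)
    {S : H →L[ℂ] H} (hS : IsSelfAdjoint S) (hcomm : ∀ i, Commute S (u i)) :
    ∃ c : ℝ, S = algebraMap ℝ (H →L[ℂ] H) c := by
  suffices hsub : (spectrum ℝ S).Subsingleton by
    obtain ⟨c, hc⟩ := ContinuousFunctionalCalculus.spectrum_nonempty (R := ℝ) S hS
    exact ⟨c, CFC.eq_algebraMap_of_spectrum_subset_singleton S c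
      (hsub.eq_singleton_of_mem hc).subset⟩
  by_contra hns
  obtain ⟨f, g, hf, hg, hgf⟩ := hS.exists_cfc_mul_eq_zero (Set.not_subsingleton_iff.mp hns)
  have hinv : ∀ i, ∀ x ∈ (cfc g S).ker, u i x ∈ (cfc g S).ker := fun i x hx => by
    rw [LinearMap.mem_ker, ContinuousLinearMap.coe_coe] at hx ⊢
    change (cfc g S * u i) x = 0
    rw [((hcomm i).cfc_real g).eq]
    exact (congrArg (u i) hx).trans (map_zero _)
  rcases hirr _ (cfc g S).isClosed_ker hinv with hbot | htop
  · refine hf (ContinuousLinearMap.ext fun x => ?_)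
    have : cfc f S x ∈ (cfc g S).ker := by
      rw [LinearMap.mem_ker, ContinuousLinearMap.coe_coe]
      exact congrArg (· x) hgf
    simpa [hbot] using this
  · exact hg (ContinuousLinearMap.ext fun x =>
      LinearMap.mem_ker.mp (htop ▸ Submodule.mem_top : x ∈ (cfc g S).ker))

theorem LinearMap.continuous_of_ae_eq_of_continuous_eval {𝕜 E F α : Type*}
    [NontriviallyNormedField 𝕜] [NormedAddCommGroup E] [NormedSpace 𝕜 E] [CompleteSpace E]
    [NormedAddCommGroup F] [NormedSpace 𝕜 F] [CompleteSpace F] [MeasurableSpace α]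
    {μ : Measure α} {p : ENNReal} [Fact (1 ≤ p)]
    (T : E →ₗ[𝕜] Lp F p μ) (φ : E → α → F) (hφ : ∀ a, Continuous fun x => φ x a)
    (hT : ∀ x, T x =ᵐ[μ] φ x) : Continuous T := by
  refine T.continuous_of_seq_closed_graph fun u x y hu hTu => Lp.ext ?_
  obtain ⟨ns, hns, hae⟩ := (tendstoInMeasure_of_tendsto_Lp hTu).exists_seq_tendsto_ae
  filter_upwards [hae, hT x, ae_all_iff.mpr fun n => hT (u n)] with a hya hxa hua
  rw [hxa]
  refine tendsto_nhds_unique hya ?_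
  simp only [Function.comp_apply, hua]
  exact ((hφ a).tendsto x).comp (hu.comp hns.tendsto_atTop)

section Adjoint

variable {𝕜 E F : Type*} [RCLike 𝕜] [NormedAddCommGroup E] [InnerProductSpace 𝕜 E]
  [CompleteSpace E] [NormedAddCommGroup F] [InnerProductSpace 𝕜 F] [CompleteSpace F]

open ContinuousLinearMap in
theorem ContinuousLinearMap.commute_adjoint_comp_self (T : E →L[𝕜] F) {U : E →L[𝕜] E}
    (hUs : Function.Surjective U) (hU : ∀ x y, inner 𝕜 (U x) (U y) = inner 𝕜 x y)
    (hTU : ∀ x y, inner 𝕜 (T (U x)) (T (U y)) = inner 𝕜 (T x) (T y)) :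
    Commute (adjoint T ∘L T) U := by
  refine ContinuousLinearMap.ext fun x => ext_inner_right 𝕜 fun y => ?_
  obtain ⟨y, rfl⟩ := hUs y
  change inner 𝕜 (adjoint T (T (U x))) (U y) = inner 𝕜 (U (adjoint T (T x))) (U y)
  rw [hU, adjoint_inner_left, adjoint_inner_left, hTU]

end Adjoint

section Complex

variable {E F : Type*} [NormedAddCommGroup E] [InnerProductSpace ℂ E]
  [CompleteSpace E] [NormedAddCommGroup F] [InnerProductSpace ℂ F] [CompleteSpace F]

open ContinuousLinearMap in
theorem ContinuousLinearMap.norm_apply_eq_sqrt_mul_norm {T : E →L[ℂ] F} {c : ℝ}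
    (hc : adjoint T ∘L T = algebraMap ℝ (E →L[ℂ] E) c) (x : E) :
    ‖T x‖ = √c * ‖x‖ := by
  have hcx : (adjoint T ∘L T) x = (c : ℂ) • x := by
    rw [hc, Algebra.algebraMap_eq_smul_one, smul_apply, one_apply_eq_self, Complex.coe_smul]
  have hre : RCLike.re (inner ℂ ((c : ℂ) • x) x) = c * ‖x‖ ^ 2 := by
    simp [inner_self_eq_norm_sq_to_K, ← Complex.ofReal_pow]
  rw [apply_norm_eq_sqrt_inner_adjoint_left, hcx, hre, Real.sqrt_mul' _ (by positivity),
    Real.sqrt_sq (norm_nonneg x)]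

theorem ContinuousLinearMap.exists_linearIsometry_eq_smul {T : E →L[ℂ] F} {c : ℝ}
    (hc : adjoint T ∘L T = algebraMap ℝ (E →L[ℂ] E) c) (hT : T ≠ 0) :
    ∃ (r : ℂ) (V : E →ₗᵢ[ℂ] F), ∀ x, V x = r • T x := by
  have hnorm := norm_apply_eq_sqrt_mul_norm hc
  obtain ⟨x, hx⟩ : ∃ x, T x ≠ 0 := by
    by_contra! h
    exact hT (ContinuousLinearMap.ext h)
  have hs : 0 < √c := by
    have := norm_pos_iff.mpr hx
    rw [hnorm] at this
    exact pos_of_mul_pos_left this (norm_nonneg x)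
  refine ⟨((√c)⁻¹ : ℝ), ⟨((√c)⁻¹ : ℝ) • (T : E →ₗ[ℂ] F), fun y => ?_⟩, fun _ => rfl⟩
  rw [LinearMap.smul_apply, norm_smul, ContinuousLinearMap.coe_coe, hnorm, Real.norm_eq_abs,
    abs_of_pos (inv_pos.mpr hs), inv_mul_cancel_left₀ hs.ne']

end Complex

section Coefficients

variable {G : Type*} [Group G] {H : Type*} [NormedAddCommGroup H] [InnerProductSpace ℂ H]

noncomputable def matrixCoeff (π : G →* (H →L[ℂ] H)) (ξ x : H) (g : G) : ℂ := inner ℂ (π g ξ) x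

variable {π : G →* (H →L[ℂ] H)} {ξ : H}

lemma matrixCoeff_map (hπu : ∀ (g : G) (x y : H), inner ℂ (π g x) (π g y) = inner ℂ x y)
    (h : G) (x : H) (g : G) : matrixCoeff π ξ (π h x) g = matrixCoeff π ξ x (h⁻¹ * g) := by
  have hg : π h (π (h⁻¹ * g) ξ) = π g ξ := by
    rw [← mul_apply_eq_comp, ← map_mul, mul_inv_cancel_left]
  rw [matrixCoeff, matrixCoeff, ← hπu h (π (h⁻¹ * g) ξ) x, hg]

variable [MeasurableSpace G] (μ : Measure G)

noncomputable def leftRegular [MeasurableMul G] [μ.IsMulLeftInvariant] (h : G) :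
    Lp ℂ 2 μ →ₗᵢ[ℂ] Lp ℂ 2 μ :=
  Lp.compMeasurePreservingₗᵢ ℂ (fun g => h⁻¹ * g) (measurePreserving_mul_left μ h⁻¹)

variable [CompleteSpace H]

noncomputable def coefficientMap (hξ : ∀ x, MemLp (matrixCoeff π ξ x) 2 μ) :
    H →L[ℂ] Lp ℂ 2 μ :=
  let T : H →ₗ[ℂ] Lp ℂ 2 μ :=
    { toFun := fun x => (hξ x).toLp
      map_add' := fun x y => by
        rw [← MemLp.toLp_add]
        exact MemLp.toLp_congr _ _ (.of_eq (funext fun g => inner_add_right _ _ _))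
      map_smul' := fun c x => by
        rw [RingHom.id_apply, ← MemLp.toLp_const_smul]
        exact MemLp.toLp_congr _ _ (.of_eq (funext fun g => inner_smul_right _ _ _)) }
  ⟨T, T.continuous_of_ae_eq_of_continuous_eval (matrixCoeff π ξ)
    (fun _ => continuous_const.inner continuous_id) fun x => (hξ x).coeFn_toLp⟩

variable {μ} (hξ : ∀ x, MemLp (matrixCoeff π ξ x) 2 μ)

lemma coeFn_coefficientMap (x : H) : coefficientMap μ hξ x =ᵐ[μ] matrixCoeff π ξ x :=
  (hξ x).coeFn_toLp

lemma coefficientMap_map [MeasurableMul G] [μ.IsMulLeftInvariant]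
    (hπu : ∀ (g : G) (x y : H), inner ℂ (π g x) (π g y) = inner ℂ x y) (h : G) (x : H) :
    coefficientMap μ hξ (π h x) = leftRegular μ h (coefficientMap μ hξ x) :=
  MemLp.toLp_congr (hξ (π h x)) ((hξ x).comp_measurePreserving (measurePreserving_mul_left μ h⁻¹))
    (.of_eq (funext (matrixCoeff_map hπu h x)))

lemma coefficientMap_self_ne_zero [TopologicalSpace G] [μ.IsOpenPosMeasure]
    (hπc : Continuous fun g => π g ξ) (hξne : ξ ≠ 0) : coefficientMap μ hξ ξ ≠ 0 := by
  intro h0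
  have hae : matrixCoeff π ξ ξ =ᵐ[μ] 0 :=
    (coeFn_coefficientMap hξ ξ).symm.trans (h0 ▸ Lp.coeFn_zero ℂ 2 μ)
  have hcont : Continuous (matrixCoeff π ξ ξ) := hπc.inner continuous_const
  have h1 := congrFun ((hcont.ae_eq_iff_eq μ continuous_const).mp hae) 1
  simp only [matrixCoeff, map_one, one_apply_eq_self] at h1
  exact hξne (inner_self_eq_zero.mp h1)

end Coefficients

theorem stmt18_general {G : Type*} [Group G] [TopologicalSpace G] [IsTopologicalGroup G]
    [MeasurableSpace G] [BorelSpace G]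
    (μ : Measure G) [μ.IsHaarMeasure]
    {H : Type*} [NormedAddCommGroup H] [InnerProductSpace ℂ H] [CompleteSpace H]
    (π : G →* (H →L[ℂ] H))
    (hπu : ∀ (g : G) (x y : H), (inner ℂ (π g x) (π g y) : ℂ) = inner ℂ x y)
    (hπc : ∀ x : H, Continuous fun g => π g x)
    (hirr : ∀ V : Submodule ℂ H, IsClosed (V : Set H) →
      (∀ g : G, ∀ v ∈ V, π g v ∈ V) → V = ⊥ ∨ V = ⊤)
    (ξ : H) (hξne : ξ ≠ 0)
    (hξ : ∀ β : H, MemLp (fun g => (inner ℂ (π g ξ) β : ℂ)) 2 μ) :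
    ∃ V : H →ₗᵢ[ℂ] Lp ℂ 2 μ, ∀ (h : G) (x : H),
      ∀ᵐ g ∂μ, (V (π h x) : G → ℂ) g = (V x : G → ℂ) (h⁻¹ * g) := by
  have : Nontrivial H := ⟨ξ, 0, hξne⟩
  have hξ' : ∀ x, MemLp (matrixCoeff π ξ x) 2 μ := hξ
  set C := coefficientMap μ hξ'
  have hsurj (h : G) : Function.Surjective (π h) := fun y =>
    ⟨π h⁻¹ y, by rw [← mul_apply_eq_comp, ← map_mul, mul_inv_cancel, map_one, one_apply_eq_self]⟩
  have hcomm (h : G) : Commute (ContinuousLinearMap.adjoint C ∘L C) (π h) :=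
    C.commute_adjoint_comp_self (hsurj h) (hπu h) fun x y => by
      rw [coefficientMap_map hξ' hπu, coefficientMap_map hξ' hπu, LinearIsometry.inner_map_map]
  obtain ⟨c, hc⟩ := IsSelfAdjoint.exists_eq_algebraMap_of_commute hirr
    C.isPositive_adjoint_comp_self.isSelfAdjoint hcomm
  obtain ⟨r, V, hV⟩ := C.exists_linearIsometry_eq_smul hc
    fun h0 => coefficientMap_self_ne_zero hξ' (hπc ξ) hξne (DFunLike.congr_fun h0 ξ)
  refine ⟨V, fun h x => ?_⟩
  have hVπ : V (π h x) = leftRegular μ h (V x) := by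
    rw [hV, hV, coefficientMap_map hξ' hπu, LinearIsometry.map_smul]
  rw [hVπ]
  exact Lp.coeFn_compMeasurePreserving _ _

/-- An irreducible strongly continuous unitary representation `π` of a locally compact group
`G` possessing a nonzero square-integrable vector embeds isometrically and equivariantly into
the left regular representation on `L²(G)`: there is an isometry `V : H → L²(G)` with
`V (π h x) (g) = (V x) (h⁻¹ g)` almost everywhere. -/
theorem stmt18 {G : Type*} [Group G] [TopologicalSpace G] [IsTopologicalGroup G]
    [LocallyCompactSpace G] [MeasurableSpace G] [BorelSpace G]
    (μ : Measure G) [μ.IsHaarMeasure]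
    {H : Type*} [NormedAddCommGroup H] [InnerProductSpace ℂ H] [CompleteSpace H]
    (π : G →* (H →L[ℂ] H))
    (hπu : ∀ (g : G) (x y : H), (inner ℂ (π g x) (π g y) : ℂ) = inner ℂ x y)
    (hπc : ∀ x : H, Continuous fun g => π g x)
    (hirr : ∀ V : Submodule ℂ H, IsClosed (V : Set H) →
      (∀ g : G, ∀ v ∈ V, π g v ∈ V) → V = ⊥ ∨ V = ⊤)
    (ξ : H) (hξne : ξ ≠ 0)
    (hξ : ∀ β : H, MemLp (fun g => (inner ℂ (π g ξ) β : ℂ)) 2 μ) :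
    ∃ V : H →ₗᵢ[ℂ] Lp ℂ 2 μ, ∀ (h : G) (x : H),
      ∀ᵐ g ∂μ, (V (π h x) : G → ℂ) g = (V x : G → ℂ) (h⁻¹ * g) :=
  stmt18_general μ π hπu hπc hirr ξ hξne hξ
end

section
/- Let A, D be C*-algebras, E a Hilbert A-module, and suppose there are hereditary cones C_A ⊆ M(A)⁺, C_K ⊆ M(K(E))⁺ and a positive, strictly continuous, linear map Ψ : M(D) → M(K(E)) = B(E) which is nondegenerate (Ψ(D⁺)·K(E) is dense in K(E)) and maps a given dense hereditary cone C_D ⊆ D⁺ into C_K. If C_D is dense in D⁺, then C_K ∩ K(E)⁺ is dense in K(E)⁺. -/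
open MultiplierAlgebra Filter Topology

/-! For `m ∈ C_K` and `d ≥ 0` we have `0 ≤ m d m ≤ ‖d‖ m² ≤ ‖d‖ ‖m‖ m`, so heredity puts `m d m`
in `C_K`. Taking `d = k k*` shows `x x* ∈ C_K` for every `x = m k`, and the parallelogram bound
`(x + y)(x + y)* ≤ 2 (x x* + y y*)` extends this to the linear span of these `x`. By strict
continuity of `Ψ` and density of `C_D` in `D⁺`, the closure of that span contains every `Ψ(b) k`
with `b ≥ 0`, so nondegeneracy makes the span dense in `K`. Finally a positive `k = c c*` is the
limit of `x x*` with `x → c` in the span. -/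

namespace DoubleCentralizer

variable {𝕜 A : Type*} [NontriviallyNormedField 𝕜] [NonUnitalNormedRing A]
  [NormedSpace 𝕜 A] [SMulCommClass 𝕜 A A] [IsScalarTower 𝕜 A A]

theorem tendsto_coe_fst_snd {ι : Type*} {l : Filter ι} {f : ι → A} {a : A}
    (h : Tendsto f l (𝓝 a)) (d : A) :
    Tendsto (fun i => (f i : 𝓜(𝕜, A)).fst d) l (𝓝 ((a : 𝓜(𝕜, A)).fst d)) ∧
      Tendsto (fun i => (f i : 𝓜(𝕜, A)).snd d) l (𝓝 ((a : 𝓜(𝕜, A)).snd d)) :=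
  ⟨h.mul_const d, h.const_mul d⟩

variable [StarRing A] [CStarRing A]

theorem fst_apply_mul (m : 𝓜(𝕜, A)) (a b : A) : m.fst (a * b) = m.fst a * b := by
  -- in a C⋆-ring, an element annihilated by every left multiplication is zero
  have h : ∀ x : A, x * m.fst (a * b) = x * (m.fst a * b) := fun x => by
    rw [← m.central, ← mul_assoc, m.central, mul_assoc]
  rw [← sub_eq_zero, ← CStarRing.star_mul_self_eq_zero_iff, mul_sub, h, sub_self]

theorem coe_fst_apply (m : 𝓜(𝕜, A)) (a : A) : ((m.fst a : A) : 𝓜(𝕜, A)) = m * a := by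
  ext : 1
  refine Prod.ext (ContinuousLinearMap.ext fun x => ?_) (ContinuousLinearMap.ext fun x => ?_)
  · exact (fst_apply_mul m a x).symm
  · exact (m.central x a).symm

end DoubleCentralizer

theorem Submodule.dense_span_of_subset_closure {R M : Type*} [Semiring R] [TopologicalSpace M]
    [AddCommMonoid M] [ContinuousAdd M] [Module R M] [ContinuousConstSMul R M] {s t : Set M}
    (hst : s ⊆ closure t) (hs : Dense (span R s : Set M)) : Dense (span R t : Set M) := by
  have : span R s ≤ (span R t).topologicalClosure :=
    span_le.mpr (hst.trans (closure_mono subset_span))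
  exact (hs.mono this).of_closure

theorem CStarAlgebra.mul_self_le_norm_smul {A : Type*} [NonUnitalCStarAlgebra A] [PartialOrder A]
    [StarOrderedRing A] {a : A} (ha : 0 ≤ a) : a * a ≤ ‖a‖ • a := by
  obtain ⟨b, hb, rfl⟩ := CStarAlgebra.nonneg_iff_exists_nonneg_and_eq_mul_self.mp ha
  have hbsa : star b = b := (IsSelfAdjoint.of_nonneg hb).star_eq
  calc b * b * (b * b) = star b * (b * b) * b := by rw [hbsa]; noncomm_ring
    _ ≤ ‖b * b‖ • (star b * b) := CStarAlgebra.star_left_conjugate_le_norm_smul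
    _ = ‖b * b‖ • (b * b) := by rw [hbsa]

structure IsHereditaryCone {A : Type*} [AddCommMonoid A] [PartialOrder A] [SMul ℝ A]
    (C : Set A) : Prop where
  nonneg ⦃x : A⦄ : x ∈ C → 0 ≤ x
  add_mem ⦃x y : A⦄ : x ∈ C → y ∈ C → x + y ∈ C
  smul_mem ⦃r : ℝ⦄ : 0 ≤ r → ∀ ⦃x : A⦄, x ∈ C → r • x ∈ C
  mem_of_le ⦃x y : A⦄ : 0 ≤ x → x ≤ y → y ∈ C → x ∈ C

namespace IsHereditaryCone

theorem zero_mem {A : Type*} [AddCommMonoid A] [PartialOrder A] [SMul ℝ A] {C : Set A}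
    (hC : IsHereditaryCone C) (hne : C.Nonempty) : 0 ∈ C :=
  let ⟨_, hy⟩ := hne
  hC.mem_of_le le_rfl (hC.nonneg hy) hy

theorem add_mul_star_add_mem {A : Type*} [NonUnitalRing A] [StarRing A] [PartialOrder A]
    [StarOrderedRing A] [SMul ℝ A] {C : Set A} (hC : IsHereditaryCone C) {x y : A}
    (hx : x * star x ∈ C) (hy : y * star y ∈ C) : (x + y) * star (x + y) ∈ C := by
  have hsum := hC.add_mem hx hy
  have hle : (x + y) * star (x + y) ≤ (x * star x + y * star y) + (x * star x + y * star y) := by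
    rw [← sub_nonneg]
    convert mul_star_self_nonneg (x - y) using 1
    rw [star_add, star_sub]
    noncomm_ring
  exact hC.mem_of_le (mul_star_self_nonneg _) hle (hC.add_mem hsum hsum)

theorem mul_mul_mem {A : Type*} [NonUnitalCStarAlgebra A] [PartialOrder A] [StarOrderedRing A]
    {C : Set A} (hC : IsHereditaryCone C) {m d : A} (hm : m ∈ C) (hd : 0 ≤ d) :
    m * d * m ∈ C := by
  have hm0 := hC.nonneg hm
  have hmsa : star m = m := (IsSelfAdjoint.of_nonneg hm0).star_eq
  have hle : m * d * m ≤ (‖d‖ * ‖m‖) • m :=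
    calc m * d * m = star m * d * m := by rw [hmsa]
      _ ≤ ‖d‖ • (star m * m) := CStarAlgebra.star_left_conjugate_le_norm_smul
      _ ≤ ‖d‖ • (‖m‖ • m) := by
        rw [hmsa]
        exact smul_le_smul_of_nonneg_left (CStarAlgebra.mul_self_le_norm_smul hm0) (norm_nonneg d)
      _ = (‖d‖ * ‖m‖) • m := (mul_smul _ _ _).symm
  exact hC.mem_of_le (conjugate_nonneg_of_nonneg hd hm0) hle
    (hC.smul_mem (by positivity) hm)

end IsHereditaryCone

section Multiplier

variable {K : Type*} [NonUnitalCStarAlgebra K] [PartialOrder 𝓜(ℂ, K)] [StarOrderedRing 𝓜(ℂ, K)]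
  {C : Set 𝓜(ℂ, K)}

theorem IsHereditaryCone.coe_mul_star_mem_of_mem_span (hC : IsHereditaryCone C)
    (hne : C.Nonempty) {x : K} (hx : x ∈ Submodule.span ℂ {z | ∃ m ∈ C, ∃ k, z = m.fst k}) :
    ((x * star x : K) : 𝓜(ℂ, K)) ∈ C := by
  let φ := DoubleCentralizer.coeHom (𝕜 := ℂ) (A := K)
  change φ (x * star x) ∈ C
  induction hx using Submodule.span_induction with
  | mem z hz =>
    obtain ⟨m, hm, k, rfl⟩ := hz
    have hmsa : star m = m := (IsSelfAdjoint.of_nonneg (hC.nonneg hm)).star_eq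
    have hφ : φ (m.fst k * star (m.fst k)) = m * (φ k * star (φ k)) * m := by
      rw [map_mul, map_star, DoubleCentralizer.coeHom_apply, DoubleCentralizer.coe_fst_apply,
        star_mul, hmsa]
      noncomm_ring
    rw [hφ]
    exact hC.mul_mul_mem hm (mul_star_self_nonneg _)
  | zero => simpa only [zero_mul, map_zero] using hC.zero_mem hne
  | add x y _ _ hx hy =>
    rw [map_mul, map_star] at hx hy ⊢
    rw [map_add]
    exact hC.add_mul_star_add_mem hx hy
  | smul a x _ hx =>
    have : a • x * star (a • x) = ((Complex.normSq a : ℝ) : ℂ) • (x * star x) := by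
      rw [star_smul, smul_mul_smul_comm, RCLike.star_def, Complex.mul_conj]
    rw [this, map_smul, Complex.coe_smul]
    exact hC.smul_mem (Complex.normSq_nonneg a) hx

theorem IsHereditaryCone.nonneg_subset_closure [PartialOrder K] [StarOrderedRing K]
    (hC : IsHereditaryCone C) (hne : C.Nonempty)
    (hdense : Dense (Submodule.span ℂ {z | ∃ m ∈ C, ∃ k, z = m.fst k} : Set K)) :
    ∀ k : K, 0 ≤ k → k ∈ closure {k' : K | 0 ≤ k' ∧ (k' : 𝓜(ℂ, K)) ∈ C} := by
  intro k hk
  obtain ⟨c, rfl⟩ := CStarAlgebra.nonneg_iff_eq_mul_star_self.mp hk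
  exact map_mem_closure (f := fun x : K => x * star x) (by fun_prop) (hdense c) fun x hx =>
    ⟨mul_star_self_nonneg x, hC.coe_mul_star_mem_of_mem_span hne hx⟩

end Multiplier

theorem stmt19_general {D : Type*} [NonUnitalNormedRing D]
    [NormedSpace ℂ D] [SMulCommClass ℂ D D] [IsScalarTower ℂ D D] [PartialOrder D]
    {K : Type*} [NonUnitalNormedRing K] [StarRing K] [CStarRing K]
    [NormedSpace ℂ K] [SMulCommClass ℂ K K] [IsScalarTower ℂ K K]
    [StarModule ℂ K] [NormedStarGroup K] [CompleteSpace K]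
    [PartialOrder K] [StarOrderedRing K]
    (C_D : Set D)
    (hdenseD : ∀ x : D, 0 ≤ x → x ∈ closure C_D)
    (C_K : Set 𝓜(ℂ, K))
    (hposK : ∀ m ∈ C_K, ∃ c : 𝓜(ℂ, K), m = star c * c)
    (haddK : ∀ m ∈ C_K, ∀ m' ∈ C_K, m + m' ∈ C_K)
    (hsmulK : ∀ (r : ℝ), 0 ≤ r → ∀ m ∈ C_K, (r : ℂ) • m ∈ C_K)
    (hheredK : ∀ u v : 𝓜(ℂ, K), (∃ c, u = star c * c) → (∃ c, v - u = star c * c) →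
      v ∈ C_K → u ∈ C_K)
    (Ψ : 𝓜(ℂ, D) →ₗ[ℂ] 𝓜(ℂ, K))
    (hΨstrict : ∀ {ι : Type} [Nonempty ι] [SemilatticeSup ι]
      (f : ι → 𝓜(ℂ, D)) (m : 𝓜(ℂ, D)),
      (∀ d : D, Tendsto (fun i => (f i).fst d) atTop (𝓝 (m.fst d)) ∧
        Tendsto (fun i => (f i).snd d) atTop (𝓝 (m.snd d))) →
      (∀ k : K, Tendsto (fun i => (Ψ (f i)).fst k) atTop (𝓝 ((Ψ m).fst k)) ∧
        Tendsto (fun i => (Ψ (f i)).snd k) atTop (𝓝 ((Ψ m).snd k))))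
    (hΨnondeg : Dense ((Submodule.span ℂ
      {z : K | ∃ (b : D) (k : K), 0 ≤ b ∧ z = (Ψ (b : 𝓜(ℂ, D))).fst k} : Submodule ℂ K) : Set K))
    (hΨC : ∀ b ∈ C_D, Ψ ((b : D) : 𝓜(ℂ, D)) ∈ C_K) :
    ∀ k : K, 0 ≤ k → k ∈ closure {k' : K | 0 ≤ k' ∧ ((k' : 𝓜(ℂ, K)) ∈ C_K)} := by
  let : NonUnitalCStarAlgebra K := { }
  let : PartialOrder 𝓜(ℂ, K) := CStarAlgebra.spectralOrder _
  let : StarOrderedRing 𝓜(ℂ, K) := CStarAlgebra.spectralOrderedRing _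
  have hC : IsHereditaryCone C_K :=
    { nonneg := fun m hm => CStarAlgebra.nonneg_iff_eq_star_mul_self.mpr (hposK m hm)
      add_mem := fun m m' hm hm' => haddK m hm m' hm'
      smul_mem := fun r hr m hm => by simpa only [Complex.coe_smul] using hsmulK r hr m hm
      mem_of_le := fun u v hu huv hv =>
        hheredK u v (CStarAlgebra.nonneg_iff_eq_star_mul_self.mp hu)
          (CStarAlgebra.nonneg_iff_eq_star_mul_self.mp (sub_nonneg.mpr huv)) hv }
  obtain ⟨b₀, hb₀⟩ : C_D.Nonempty := closure_nonempty_iff.mp ⟨0, hdenseD 0 le_rfl⟩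
  refine hC.nonneg_subset_closure ⟨_, hΨC b₀ hb₀⟩
    (Submodule.dense_span_of_subset_closure ?_ hΨnondeg)
  rintro _ ⟨b, k, hb, rfl⟩
  obtain ⟨bs, hbs, hlim⟩ := mem_closure_iff_seq_limit.mp (hdenseD b hb)
  exact mem_closure_of_tendsto (hΨstrict _ _ (DoubleCentralizer.tendsto_coe_fst_snd hlim) k).1
    (Eventually.of_forall fun n => ⟨_, hΨC _ (hbs n), k, rfl⟩)

/-- Integrability is inherited along nondegenerate, positive, strictly continuous maps:
given C*-algebras `D` and `K` (the latter playing the role of `K(E)` for a Hilbert module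
`E`), a dense hereditary cone `C_D ⊆ D⁺`, a hereditary cone `C_K ⊆ M(K)⁺`, and a positive,
strictly continuous linear map `Ψ : M(D) → M(K)` which is nondegenerate (the products
`Ψ(b) k` for `b ∈ D⁺`, `k ∈ K` span a dense subspace of `K`) and maps `C_D` into `C_K`,
the cone `C_K ∩ K⁺` is dense in `K⁺`. -/
theorem stmt19 {D : Type*} [NonUnitalNormedRing D] [StarRing D] [CStarRing D]
    [NormedSpace ℂ D] [SMulCommClass ℂ D D] [IsScalarTower ℂ D D]
    [StarModule ℂ D] [NormedStarGroup D] [CompleteSpace D]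
    [PartialOrder D] [StarOrderedRing D]
    {K : Type*} [NonUnitalNormedRing K] [StarRing K] [CStarRing K]
    [NormedSpace ℂ K] [SMulCommClass ℂ K K] [IsScalarTower ℂ K K]
    [StarModule ℂ K] [NormedStarGroup K] [CompleteSpace K]
    [PartialOrder K] [StarOrderedRing K]
    (C_D : Set D)
    (hposD : ∀ x ∈ C_D, 0 ≤ x)
    (haddD : ∀ x ∈ C_D, ∀ y ∈ C_D, x + y ∈ C_D)
    (hheredD : ∀ u v : D, 0 ≤ u → u ≤ v → v ∈ C_D → u ∈ C_D)
    (hdenseD : ∀ x : D, 0 ≤ x → x ∈ closure C_D)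
    (C_K : Set 𝓜(ℂ, K))
    (hposK : ∀ m ∈ C_K, ∃ c : 𝓜(ℂ, K), m = star c * c)
    (haddK : ∀ m ∈ C_K, ∀ m' ∈ C_K, m + m' ∈ C_K)
    (hsmulK : ∀ (r : ℝ), 0 ≤ r → ∀ m ∈ C_K, (r : ℂ) • m ∈ C_K)
    (hheredK : ∀ u v : 𝓜(ℂ, K), (∃ c, u = star c * c) → (∃ c, v - u = star c * c) →
      v ∈ C_K → u ∈ C_K)
    (Ψ : 𝓜(ℂ, D) →ₗ[ℂ] 𝓜(ℂ, K))
    (hΨpos : ∀ m : 𝓜(ℂ, D), (∃ c, m = star c * c) → ∃ c, Ψ m = star c * c)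
    (hΨstrict : ∀ {ι : Type} [Nonempty ι] [SemilatticeSup ι]
      (f : ι → 𝓜(ℂ, D)) (m : 𝓜(ℂ, D)),
      (∀ d : D, Tendsto (fun i => (f i).fst d) atTop (𝓝 (m.fst d)) ∧
        Tendsto (fun i => (f i).snd d) atTop (𝓝 (m.snd d))) →
      (∀ k : K, Tendsto (fun i => (Ψ (f i)).fst k) atTop (𝓝 ((Ψ m).fst k)) ∧
        Tendsto (fun i => (Ψ (f i)).snd k) atTop (𝓝 ((Ψ m).snd k))))
    (hΨnondeg : Dense ((Submodule.span ℂ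
      {z : K | ∃ (b : D) (k : K), 0 ≤ b ∧ z = (Ψ (b : 𝓜(ℂ, D))).fst k} : Submodule ℂ K) : Set K))
    (hΨC : ∀ b ∈ C_D, Ψ ((b : D) : 𝓜(ℂ, D)) ∈ C_K) :
    ∀ k : K, 0 ≤ k → k ∈ closure {k' : K | 0 ≤ k' ∧ ((k' : 𝓜(ℂ, K)) ∈ C_K)} :=
  stmt19_general C_D hdenseD C_K hposK haddK hsmulK hheredK Ψ hΨstrict hΨnondeg hΨC
end
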